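/- arXiv:2402.10842 — 9 statements merged into one kernel-verified Lean document; each statement's English description precedes it below -/
import Mathlib

section
/- Let G be a simple graph of order n ≥ 2 that contains at least one full vertex (a vertex adjacent to all other vertices of G). Then PC(G) = n, i.e., the partition of V(G) into n singleton sets is a paired coalition partition of maximum order. -/
namespace PCPaper

variable {V : Type*}

/-- `S` is a dominating set of `G`. -/
def IsDomSet (G : SimpleGraph V) (S : Set V) : Prop :=
  ∀ v : V, v ∈ S ∨ ∃ u ∈ S, G.Adj u v

/-- `S` is a paired dominating set of `G`: a dominating set such that the subgraph of `G`
induced by `S` contains a perfect matching (a matching whose vertex set is exactly `S`). -/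
def IsPairedDomSet (G : SimpleGraph V) (S : Set V) : Prop :=
  IsDomSet G S ∧ ∃ M : G.Subgraph, M.verts = S ∧ M.IsMatching

/-- Disjoint sets `A`, `B`, neither a paired dominating set, whose union is one. -/
def PairedCoalition (G : SimpleGraph V) (A B : Set V) : Prop :=
  Disjoint A B ∧ ¬ IsPairedDomSet G A ∧ ¬ IsPairedDomSet G B ∧ IsPairedDomSet G (A ∪ B)

variable [Fintype V] [DecidableEq V]

/-- `π` is a paired coalition partition of `G`: no part is a paired dominating set and every
part forms a paired coalition with some other part. -/
def IsPCPartition (G : SimpleGraph V) (π : Finpartition (Finset.univ : Finset V)) : Prop :=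
  ∀ A ∈ π.parts, ¬ IsPairedDomSet G (A : Set V) ∧
    ∃ B ∈ π.parts, B ≠ A ∧ PairedCoalition G (A : Set V) (B : Set V)

/-- The paired coalition number: the maximum number of parts of a pc-partition of `G`,
and `0` if `G` admits no pc-partition. -/
noncomputable def pcNumber (G : SimpleGraph V) : ℕ :=
  sSup {k | ∃ π : Finpartition (Finset.univ : Finset V), IsPCPartition G π ∧ π.parts.card = k}

/-- The paired coalition graph of a partition `π` of `G`: vertices are the parts of `π`,
two parts being adjacent iff they form a paired coalition in `G`. -/
def PCG (G : SimpleGraph V) (π : Finpartition (Finset.univ : Finset V)) :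
    SimpleGraph {A : Finset V // A ∈ π.parts} where
  Adj A B := PairedCoalition G ((A : Finset V) : Set V) ((B : Finset V) : Set V)
  symm := by
    constructor
    rintro A B ⟨h1, h2, h3, h4⟩
    exact ⟨h1.symm, h3, h2, by rwa [Set.union_comm]⟩
  loopless := by
    constructor
    rintro A ⟨h1, h2, h3, h4⟩
    exact h2 (by rwa [Set.union_self] at h4)

end PCPaper

/-!
No singleton is a paired dominating set, since a matching cannot cover a single vertex, whereas
a full vertex together with any other vertex is one. Hence the partition into singletons is a
pc-partition, each singleton pairing with the full vertex (and the full vertex with any other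
vertex), and no partition has more than `n` parts.
-/

namespace PCPaper

variable {V : Type*} {G : SimpleGraph V}

theorem not_isPairedDomSet_singleton (x : V) : ¬ IsPairedDomSet G {x} := by
  rintro ⟨-, M, hM, hmatch⟩
  obtain ⟨y, hxy, -⟩ := hmatch (hM ▸ rfl : x ∈ M.verts)
  have hy : y = x := by simpa [hM] using hxy.snd_mem
  exact G.loopless.irrefl x (M.adj_sub (hy ▸ hxy))

theorem isPairedDomSet_pair_of_full {v x : V} (hv : ∀ w, w ≠ v → G.Adj v w) (hx : x ≠ v) :
    IsPairedDomSet G {v, x} := by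
  refine ⟨fun w => ?_, G.subgraphOfAdj (hv x hx), by simp,
    SimpleGraph.Subgraph.IsMatching.subgraphOfAdj _⟩
  by_cases hw : w = v
  · exact Or.inl (Or.inl hw)
  · exact Or.inr ⟨v, Or.inl rfl, hv w hw⟩

theorem PairedCoalition.symm {A B : Set V} (h : PairedCoalition G A B) : PairedCoalition G B A :=
  ⟨h.1.symm, h.2.2.1, h.2.1, Set.union_comm A B ▸ h.2.2.2⟩

theorem pairedCoalition_singleton_full {v x : V} (hv : ∀ w, w ≠ v → G.Adj v w) (hx : x ≠ v) :
    PairedCoalition G {v} {x} :=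
  ⟨Set.disjoint_singleton.2 hx.symm, not_isPairedDomSet_singleton v,
    not_isPairedDomSet_singleton x, isPairedDomSet_pair_of_full hv hx⟩

variable [Fintype V] [DecidableEq V]

theorem card_mem_upperBounds_pcPartitionCards (G : SimpleGraph V) :
    Fintype.card V ∈ upperBounds
      {k | ∃ π : Finpartition (Finset.univ : Finset V), IsPCPartition G π ∧ π.parts.card = k} :=
  fun _ ⟨π, _, hπ⟩ => hπ ▸ by simpa using π.card_parts_le_card

theorem pcNumber_le_card (G : SimpleGraph V) : pcNumber G ≤ Fintype.card V :=
  csSup_le' (card_mem_upperBounds_pcPartitionCards G)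

theorem card_parts_le_pcNumber {π : Finpartition (Finset.univ : Finset V)}
    (h : IsPCPartition G π) : π.parts.card ≤ pcNumber G :=
  le_csSup ⟨_, card_mem_upperBounds_pcPartitionCards G⟩ ⟨π, h, rfl⟩

theorem isPCPartition_bot_of_full (hn : 2 ≤ Fintype.card V) {v : V}
    (hv : ∀ w, w ≠ v → G.Adj v w) : IsPCPartition G ⊥ := by
  intro A hA
  obtain ⟨a, -, rfl⟩ := Finpartition.mem_bot_iff.1 hA
  have partner : ∃ b ≠ a, PairedCoalition G {a} {b} := by
    by_cases ha : a = v
    · subst ha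
      obtain ⟨b, hb⟩ := Fintype.exists_ne_of_one_lt_card hn a
      exact ⟨b, hb, pairedCoalition_singleton_full hv hb⟩
    · exact ⟨v, Ne.symm ha, (pairedCoalition_singleton_full hv ha).symm⟩
  obtain ⟨b, hb, hab⟩ := partner
  refine ⟨by simpa using not_isPairedDomSet_singleton a, {b}, ?_, by simpa using hb, by simpa⟩
  exact Finpartition.mem_bot_iff.2 ⟨b, Finset.mem_univ b, rfl⟩

end PCPaper

open PCPaper in
/-- A graph of order `n ≥ 2` with a full vertex has paired coalition number `n`. -/
theorem stmt_0 {V : Type*} [Fintype V] [DecidableEq V] (G : SimpleGraph V)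
    (hn : 2 ≤ Fintype.card V) (v : V) (hv : ∀ w, w ≠ v → G.Adj v w) :
    pcNumber G = Fintype.card V :=
  (pcNumber_le_card G).antisymm <| by
    simpa using card_parts_le_pcNumber (isPCPartition_bot_of_full hn hv)
end

section
/- Let G be a simple graph with minimum degree δ(G) = 1, let S be the set of support vertices of G, and let π be a pc-partition of G. Then for every pair (A, B) of parts of π that form a paired coalition, it holds that S ⊆ A ∪ B. -/
namespace PCPaper

variable {V : Type*}

theorem IsPairedDomSet.mem_of_adj_of_degree_eq_one {G : SimpleGraph V} {S : Set V}
    (hS : IsPairedDomSet G S) {u v : V} [Fintype (G.neighborSet u)] (hvu : G.Adj v u)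
    (hu : G.degree u = 1) : v ∈ S := by
  obtain ⟨hdom, M, rfl, hM⟩ := hS
  have eq_of_adj : ∀ w, G.Adj u w → w = v := fun w huw =>
    (SimpleGraph.degree_eq_one_iff_existsUnique_adj.mp hu).unique huw hvu.symm
  by_cases huM : u ∈ M.verts
  · obtain ⟨w, huw, -⟩ := hM huM
    exact eq_of_adj w huw.adj_sub ▸ M.edge_vert huw.symm
  · obtain huM' | ⟨w, hwM, hwu⟩ := hdom u
    · exact absurd huM' huM
    · exact eq_of_adj w hwu.symm ▸ hwM

end PCPaper

open PCPaper in
theorem stmt_2_general {V : Type*} [Fintype V] (G : SimpleGraph V)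
    [DecidableRel G.Adj]
    (A B : Finset V)
    (hAB : PairedCoalition G (A : Set V) (B : Set V)) :
    {v : V | ∃ u, G.Adj v u ∧ G.degree u = 1} ⊆ (A : Set V) ∪ (B : Set V) := by
  obtain ⟨-, -, -, hunion⟩ := hAB
  rintro v ⟨u, hvu, hu⟩
  exact hunion.mem_of_adj_of_degree_eq_one hvu hu

open PCPaper in
/-- If `δ(G) = 1` and `π` is a pc-partition of `G`, then every pair of pc-partners in `π`
together contains all support vertices of `G`. -/
theorem stmt_2 {V : Type*} [Fintype V] [DecidableEq V] (G : SimpleGraph V)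
    [DecidableRel G.Adj]
    (hδ : ∀ v, 1 ≤ G.degree v) (hx : ∃ x, G.degree x = 1)
    (π : Finpartition (Finset.univ : Finset V)) (hπ : IsPCPartition G π)
    (A B : Finset V) (hA : A ∈ π.parts) (hB : B ∈ π.parts)
    (hAB : PairedCoalition G (A : Set V) (B : Set V)) :
    {v : V | ∃ u, G.Adj v u ∧ G.degree u = 1} ⊆ (A : Set V) ∪ (B : Set V) :=
  stmt_2_general G A B hAB
end

section
/- Let G be a simple graph with minimum degree δ(G) = 1 and PC(G) ≥ 3, and let π be a pc-partition of G of maximum order PC(G). Then there exists a part of π that contains all support vertices of G. -/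
namespace PCPaper

variable {V : Type*} {G : SimpleGraph V}

theorem IsPairedDomSet.mem_of_adj_leaf {S : Set V} {u v : V} [Fintype (G.neighborSet u)]
    (hS : IsPairedDomSet G S) (hvu : G.Adj v u) (hu : G.degree u = 1) : v ∈ S := by
  obtain ⟨w, -, huniq⟩ := SimpleGraph.degree_eq_one_iff_existsUnique_adj.mp hu
  have hleaf : ∀ x, G.Adj u x → x = v := fun x hx => (huniq x hx).trans (huniq v hvu.symm).symm
  obtain ⟨hdom, M, rfl, hM⟩ := hS
  rcases hdom u with huM | ⟨x, hxM, hxu⟩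
  · -- the leaf is matched, and its partner can only be its support vertex
    obtain ⟨x, hux, -⟩ := hM huM
    exact hleaf x (M.adj_sub hux) ▸ M.edge_vert hux.symm
  · exact hleaf x hxu.symm ▸ hxM

variable [Fintype V] [DecidableEq V] [DecidableRel G.Adj]

/-- Two support vertices `v`, `w` in different parts `A`, `B` cannot both be dominated by the
union of a third part with its coalition partner. -/
theorem IsPCPartition.mem_of_adj_leaf {π : Finpartition (Finset.univ : Finset V)}
    (hπ : IsPCPartition G π) (hcard : 2 < π.parts.card) {A : Finset V} (hA : A ∈ π.parts)
    {v w u u' : V} (hvA : v ∈ A) (hvu : G.Adj v u) (hu : G.degree u = 1)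
    (hwu' : G.Adj w u') (hu' : G.degree u' = 1) : w ∈ A := by
  obtain ⟨B, hB, hwB⟩ := π.exists_mem (Finset.mem_univ w)
  obtain ⟨C, hC, hCAB⟩ : ∃ C ∈ π.parts, C ∉ ({A, B} : Finset (Finset V)) :=
    Finset.exists_mem_notMem_of_card_lt_card (Finset.card_le_two.trans_lt hcard)
  simp only [Finset.mem_insert, Finset.mem_singleton, not_or] at hCAB
  obtain ⟨-, D, hD, -, -, -, -, hCD⟩ := hπ C hC
  have hDA : D = A := by
    rcases hCD.mem_of_adj_leaf hvu hu with hvC | hvD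
    · exact absurd (π.eq_of_mem_parts hC hA hvC hvA) hCAB.1
    · exact π.eq_of_mem_parts hD hA hvD hvA
  have hDB : D = B := by
    rcases hCD.mem_of_adj_leaf hwu' hu' with hwC | hwD
    · exact absurd (π.eq_of_mem_parts hC hB hwC hwB) hCAB.2
    · exact π.eq_of_mem_parts hD hB hwD hwB
  exact hDA ▸ hDB ▸ hwB

theorem IsPCPartition.exists_part_forall_support_mem {π : Finpartition (Finset.univ : Finset V)}
    (hπ : IsPCPartition G π) (hcard : 2 < π.parts.card) :
    ∃ A ∈ π.parts, ∀ v : V, (∃ u, G.Adj v u ∧ G.degree u = 1) → v ∈ A := by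
  by_cases hsupp : ∃ v u, G.Adj v u ∧ G.degree u = 1
  · obtain ⟨v, u, hvu, hu⟩ := hsupp
    obtain ⟨A, hA, hvA⟩ := π.exists_mem (Finset.mem_univ v)
    exact ⟨A, hA, fun w ⟨u', hwu', hu'⟩ => hπ.mem_of_adj_leaf hcard hA hvA hvu hu hwu' hu'⟩
  · obtain ⟨A, hA⟩ := Finset.card_pos.mp (Nat.zero_lt_of_lt hcard)
    exact ⟨A, hA, fun v hv => absurd ⟨v, hv⟩ hsupp⟩

end PCPaper

open PCPaper in
theorem stmt_3_general {V : Type*} [Fintype V] [DecidableEq V] (G : SimpleGraph V)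
    [DecidableRel G.Adj]
    (hpc : 3 ≤ pcNumber G)
    (π : Finpartition (Finset.univ : Finset V)) (hπ : IsPCPartition G π)
    (hmax : π.parts.card = pcNumber G) :
    ∃ A ∈ π.parts, ∀ v : V, (∃ u, G.Adj v u ∧ G.degree u = 1) → v ∈ A :=
  hπ.exists_part_forall_support_mem (hmax ▸ hpc)

open PCPaper in
/-- If `δ(G) = 1` and `PC(G) ≥ 3`, then any maximum pc-partition has a part containing
all support vertices of `G`. -/
theorem stmt_3 {V : Type*} [Fintype V] [DecidableEq V] (G : SimpleGraph V)
    [DecidableRel G.Adj]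
    (hδ : ∀ v, 1 ≤ G.degree v) (hx : ∃ x, G.degree x = 1)
    (hpc : 3 ≤ pcNumber G)
    (π : Finpartition (Finset.univ : Finset V)) (hπ : IsPCPartition G π)
    (hmax : π.parts.card = pcNumber G) :
    ∃ A ∈ π.parts, ∀ v : V, (∃ u, G.Adj v u ∧ G.degree u = 1) → v ∈ A :=
  stmt_3_general G hpc π hπ hmax
end

section
/- Let G be a simple graph with minimum degree δ(G) = 1 and PC(G) ≥ 3, let π be a pc-partition of G of maximum order PC(G), and let S be a part of π containing all support vertices of G. Then for every pair (A, B) of parts of π that form a paired coalition, it holds that S ∈ {A, B}. -/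
namespace PCPaper

open SimpleGraph

variable {V : Type*} {G : SimpleGraph V}

/-- A leaf outside `T` is dominated only by its neighbour, and a leaf inside `T` is matched
only to its neighbour. -/
theorem IsPairedDomSet.mem_of_adj_of_degree_eq_one_s4 {T : Set V} (hT : IsPairedDomSet G T)
    {x v : V} [Fintype (G.neighborSet x)] (hx : G.degree x = 1) (hxv : G.Adj x v) : v ∈ T := by
  obtain ⟨w, -, hw⟩ := degree_eq_one_iff_existsUnique_adj.mp hx
  have hunique : ∀ u, G.Adj x u → u = v := fun u hu => (hw u hu).trans (hw v hxv).symm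
  obtain ⟨hdom, M, hMverts, hM⟩ := hT
  rcases hdom x with hxT | ⟨u, huT, hux⟩
  · rw [← hMverts] at hxT ⊢
    obtain ⟨y, hxy, -⟩ := hM hxT
    exact hunique y (M.adj_sub hxy) ▸ M.edge_vert hxy.symm
  · exact hunique u hux.symm ▸ huT

end PCPaper

open PCPaper in
theorem stmt_4_general {V : Type*} [Fintype V] [DecidableEq V] (G : SimpleGraph V)
    [DecidableRel G.Adj]
    (hx : ∃ x, G.degree x = 1)
    (π : Finpartition (Finset.univ : Finset V))
    (S : Finset V) (hS : S ∈ π.parts)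
    (hsupp : ∀ v : V, (∃ u, G.Adj v u ∧ G.degree u = 1) → v ∈ S) :
    ∀ A ∈ π.parts, ∀ B ∈ π.parts,
      PairedCoalition G (A : Set V) (B : Set V) → S = A ∨ S = B := by
  rintro A hA B hB ⟨-, -, -, hAB⟩
  obtain ⟨x, hx⟩ := hx
  obtain ⟨v, hxv, -⟩ := SimpleGraph.degree_eq_one_iff_existsUnique_adj.mp hx
  have hvS : v ∈ S := hsupp v ⟨x, hxv.symm, hx⟩
  rcases hAB.mem_of_adj_of_degree_eq_one_s4 hx hxv with hvA | hvB
  · exact Or.inl (π.eq_of_mem_parts hS hA hvS hvA)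
  · exact Or.inr (π.eq_of_mem_parts hS hB hvS hvB)

open PCPaper in
/-- If `δ(G) = 1`, `PC(G) ≥ 3`, `π` is a maximum pc-partition and `S ∈ π` contains all
support vertices, then every paired coalition in `π` involves `S`. -/
theorem stmt_4 {V : Type*} [Fintype V] [DecidableEq V] (G : SimpleGraph V)
    [DecidableRel G.Adj]
    (hδ : ∀ v, 1 ≤ G.degree v) (hx : ∃ x, G.degree x = 1)
    (hpc : 3 ≤ pcNumber G)
    (π : Finpartition (Finset.univ : Finset V)) (hπ : IsPCPartition G π)
    (hmax : π.parts.card = pcNumber G)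
    (S : Finset V) (hS : S ∈ π.parts)
    (hsupp : ∀ v : V, (∃ u, G.Adj v u ∧ G.degree u = 1) → v ∈ S) :
    ∀ A ∈ π.parts, ∀ B ∈ π.parts,
      PairedCoalition G (A : Set V) (B : Set V) → S = A ∨ S = B :=
  stmt_4_general G hx π S hS hsupp
end

section
/- Let G be a simple graph with minimum degree δ(G) = 1, and let π be a pc-partition of G with k parts. Then the paired coalition graph PCG(G, π) is isomorphic to the star K_{1,k−1}. -/
/-! A leaf `x` with neighbour `y` forces `y` into every paired dominating set `S`: either `x ∈ S`,
and its partner in the perfect matching of `S` can only be `y`, or `x` is dominated, necessarily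
by `y`. So every paired coalition involves the part `Y` containing `y`; conversely, the coalition
partner of any other part must contain `y`, hence is `Y`. Thus `PCG(G, π)` is the star centred
at `Y`. -/
namespace SimpleGraph

variable {W : Type*}

def starGraphIsoCompleteBipartiteGraph [DecidableEq W] (r : W) :
    starGraph r ≃g completeBipartiteGraph Unit {v // v ≠ r} where
  toEquiv := (Equiv.sumCompl (· = r)).symm.trans ((Equiv.ofUnique _ Unit).sumCongr (Equiv.refl _))
  map_rel_iff' := by
    intro a b
    by_cases ha : a = r <;> by_cases hb : b = r <;> simp [Equiv.sumCompl, ha, hb, @eq_comm _ r b]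

end SimpleGraph

namespace PCPaper

open SimpleGraph

variable {V : Type*}

theorem IsPairedDomSet.mem_of_forall_adj_eq {G : SimpleGraph V} {S : Set V} {x y : V}
    (hS : IsPairedDomSet G S) (hxy : ∀ u, G.Adj x u → u = y) : y ∈ S := by
  obtain ⟨hdom, M, rfl, hM⟩ := hS
  rcases hdom x with hx | ⟨u, hu, hux⟩
  · obtain ⟨w, hw, -⟩ := hM hx
    exact hxy w (M.adj_sub hw) ▸ M.edge_vert hw.symm
  · exact hxy u hux.symm ▸ hu

variable [Fintype V] [DecidableEq V] {G : SimpleGraph V}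
  {π : Finpartition (Finset.univ : Finset V)}

theorem pcg_adj_part_of_ne (hπ : IsPCPartition G π) {y : V}
    (hy : ∀ S, IsPairedDomSet G S → y ∈ S) (A : {A : Finset V // A ∈ π.parts})
    (hA : A.1 ≠ π.part y) :
    (PCG G π).Adj ⟨π.part y, π.part_mem.2 (Finset.mem_univ y)⟩ A := by
  obtain ⟨-, B, hB, -, hAB⟩ := hπ A.1 A.2
  have hyB : y ∈ B := (hy _ hAB.2.2.2).resolve_left fun hyA => hA (π.part_eq_of_mem A.2 hyA).symm
  obtain rfl := π.part_eq_of_mem hB hyB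
  exact (PCG G π).adj_symm hAB

theorem pcg_eq_starGraph (hπ : IsPCPartition G π) {y : V}
    (hy : ∀ S, IsPairedDomSet G S → y ∈ S) :
    PCG G π = starGraph ⟨π.part y, π.part_mem.2 (Finset.mem_univ y)⟩ := by
  ext A B
  rw [starGraph_adj]
  constructor
  · intro hAB
    refine ⟨hAB.ne, ?_⟩
    rcases hy _ hAB.2.2.2 with hyA | hyB
    · exact Or.inl (Subtype.ext (π.part_eq_of_mem A.2 hyA).symm)
    · exact Or.inr (Subtype.ext (π.part_eq_of_mem B.2 hyB).symm)
  · rintro ⟨hne, rfl | rfl⟩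
    · exact pcg_adj_part_of_ne hπ hy B fun h => hne (Subtype.ext h).symm
    · exact (pcg_adj_part_of_ne hπ hy A fun h => hne (Subtype.ext h)).symm

end PCPaper

open PCPaper in
theorem stmt_5_general {V : Type*} [Fintype V] [DecidableEq V] (G : SimpleGraph V)
    [DecidableRel G.Adj]
    (hx : ∃ x, G.degree x = 1)
    (π : Finpartition (Finset.univ : Finset V)) (hπ : IsPCPartition G π)
    (k : ℕ) (hk : π.parts.card = k) :
    Nonempty (PCG G π ≃g completeBipartiteGraph (Fin 1) (Fin (k - 1))) := by
  obtain ⟨x, hxdeg⟩ := hx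
  obtain ⟨y, -, hxy⟩ := SimpleGraph.degree_eq_one_iff_existsUnique_adj.mp hxdeg
  have hy : ∀ S, IsPairedDomSet G S → y ∈ S := fun S hS =>
    hS.mem_of_forall_adj_eq hxy
  rw [pcg_eq_starGraph hπ hy]
  set Y : {A : Finset V // A ∈ π.parts} := ⟨π.part y, π.part_mem.2 (Finset.mem_univ y)⟩
  have hcard : Fintype.card {A // A ≠ Y} = k - 1 := by
    rw [Fintype.card_subtype_compl, Fintype.card_subtype_eq, Fintype.card_coe, hk]
  exact ⟨(SimpleGraph.starGraphIsoCompleteBipartiteGraph Y).trans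
    (SimpleGraph.completeBipartiteGraphCongr (Equiv.ofUnique _ _)
      (Fintype.equivFinOfCardEq hcard))⟩

open PCPaper in
/-- If `δ(G) = 1` and `π` is a pc-partition of `G` of order `k`, then
`PCG(G, π) ≃ K_{1,k-1}`. -/
theorem stmt_5 {V : Type*} [Fintype V] [DecidableEq V] (G : SimpleGraph V)
    [DecidableRel G.Adj]
    (hδ : ∀ v, 1 ≤ G.degree v) (hx : ∃ x, G.degree x = 1)
    (π : Finpartition (Finset.univ : Finset V)) (hπ : IsPCPartition G π)
    (k : ℕ) (hk : π.parts.card = k) :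
    Nonempty (PCG G π ≃g completeBipartiteGraph (Fin 1) (Fin (k - 1))) :=
  stmt_5_general G hx π hπ k hk
end

section
/- Let T be a tree containing at least one strong support vertex, let v_1, …, v_t be the strong support vertices of T, and for each i let l_i be the number of leaves of T adjacent to v_i. If T admits a pc-partition, then PC(T) ≥ max{l_i : i = 1, …, t} + 1. -/
/-!
Every paired dominating set meets the leaves hanging at a vertex `v` in at most one vertex,
because a leaf in a perfect matching must be matched to `v`. Hence in a pc-partition the
leaves at `v` lie in pairwise different parts, and the coalition partner of the part of one
such leaf contains none of them: that gives `l_v + 1` distinct parts.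
-/

namespace PCPaper

open Finset

variable {V : Type*} {G : SimpleGraph V}

theorem _root_.SimpleGraph.Subgraph.IsMatching.adj_of_degree_eq_one {M : G.Subgraph}
    (hM : M.IsMatching) {u v : V} [Fintype (G.neighborSet u)] (hu : u ∈ M.verts) (hdeg : G.degree u = 1) (hvu : G.Adj v u) :
    M.Adj v u := by
  obtain ⟨w, huw, -⟩ := hM hu
  obtain ⟨_, -, hunique⟩ := SimpleGraph.degree_eq_one_iff_existsUnique_adj.mp hdeg
  have hwv : w = v := (hunique w (M.adj_sub huw)).trans (hunique v hvu.symm).symm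
  exact (hwv ▸ huw).symm

theorem IsPairedDomSet.eq_of_adj_of_degree_eq_one {S : Set V} (hS : IsPairedDomSet G S)
    {v u₁ u₂ : V} [Fintype (G.neighborSet u₁)] [Fintype (G.neighborSet u₂)]
    (h₁ : G.Adj v u₁) (hdeg₁ : G.degree u₁ = 1) (hu₁ : u₁ ∈ S)
    (h₂ : G.Adj v u₂) (hdeg₂ : G.degree u₂ = 1) (hu₂ : u₂ ∈ S) : u₁ = u₂ := by
  obtain ⟨-, M, rfl, hM⟩ := hS
  exact hM.eq_of_adj_left (hM.adj_of_degree_eq_one hu₁ hdeg₁ h₁)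
    (hM.adj_of_degree_eq_one hu₂ hdeg₂ h₂)

theorem IsPairedDomSet.subsingleton_inter_leaves [Fintype V] [DecidableRel G.Adj] {S : Set V}
    (hS : IsPairedDomSet G S) (v : V) :
    (S ∩ ↑(univ.filter fun u => G.Adj v u ∧ G.degree u = 1)).Subsingleton := by
  rintro u₁ ⟨hu₁, h₁⟩ u₂ ⟨hu₂, h₂⟩
  simp only [coe_filter, mem_univ, true_and, Set.mem_ofPred_eq] at h₁ h₂
  exact hS.eq_of_adj_of_degree_eq_one h₁.1 h₁.2 hu₁ h₂.1 h₂.2 hu₂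

variable [Fintype V] [DecidableEq V] {π : Finpartition (univ : Finset V)}

theorem IsPCPartition.card_add_one_le_card_parts (hπ : IsPCPartition G π) {L : Finset V}
    (hL : L.Nonempty) (hsep : ∀ S, IsPairedDomSet G S → (S ∩ L : Set V).Subsingleton) :
    #L + 1 ≤ #π.parts := by
  have hmem (u : V) : u ∈ π.part u := π.mem_part (mem_univ u)
  have hpart (u : V) : π.part u ∈ π.parts := π.part_mem.2 (mem_univ u)
  have hinj : Set.InjOn π.part L := by
    intro u₁ h₁ u₂ h₂ heq
    obtain ⟨-, B, -, -, -, -, -, hpds⟩ := hπ _ (hpart u₁)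
    exact hsep _ hpds ⟨Or.inl (hmem u₁), h₁⟩ ⟨Or.inl (heq ▸ hmem u₂ : u₂ ∈ π.part u₁), h₂⟩
  obtain ⟨u₀, hu₀⟩ := hL
  obtain ⟨-, B, hB, hBne, -, -, -, hpds⟩ := hπ _ (hpart u₀)
  have hBnotin : B ∉ L.image π.part := by
    rintro hBL
    obtain ⟨u, huL, rfl⟩ := mem_image.mp hBL
    have huu₀ : u = u₀ := hsep _ hpds ⟨Or.inr (hmem u), huL⟩ ⟨Or.inl (hmem u₀), hu₀⟩
    exact hBne (huu₀ ▸ rfl)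
  have hsub : insert B (L.image π.part) ⊆ π.parts := by
    refine insert_subset hB fun P hP => ?_
    obtain ⟨u, -, rfl⟩ := mem_image.mp hP
    exact hpart u
  calc #L + 1 = #(insert B (L.image π.part)) := by
        rw [card_insert_of_notMem hBnotin, card_image_of_injOn hinj]
    _ ≤ #π.parts := card_le_card hsub

theorem IsPCPartition.card_parts_le_pcNumber (hπ : IsPCPartition G π) :
    #π.parts ≤ pcNumber G := by
  refine le_csSup ⟨Fintype.card V, ?_⟩ ⟨π, hπ, rfl⟩
  rintro k ⟨π', -, rfl⟩
  simpa using π'.card_parts_le_card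

end PCPaper

open PCPaper Finset in
theorem stmt_11_general {V : Type*} [Fintype V] [DecidableEq V] (T : SimpleGraph V)
    [DecidableRel T.Adj]
    (hpc : ∃ π : Finpartition (univ : Finset V), IsPCPartition T π) :
    ∀ v : V, 2 ≤ (univ.filter fun u => T.Adj v u ∧ T.degree u = 1).card →
      (univ.filter fun u => T.Adj v u ∧ T.degree u = 1).card + 1 ≤ pcNumber T := by
  intro v hl
  obtain ⟨π, hπ⟩ := hpc
  calc _ ≤ #π.parts := hπ.card_add_one_le_card_parts (card_pos.mp (by omega))
        fun _ hS => hS.subsingleton_inter_leaves v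
    _ ≤ pcNumber T := hπ.card_parts_le_pcNumber

open PCPaper Finset in
/-- If a tree `T` has a strong support vertex and admits a pc-partition, then
`PC(T) ≥ max{l_i} + 1`, i.e. `PC(T) ≥ l_v + 1` for every strong support vertex `v`,
where `l_v` is the number of leaves adjacent to `v`. -/
theorem stmt_11 {V : Type*} [Fintype V] [DecidableEq V] (T : SimpleGraph V)
    [DecidableRel T.Adj] (hT : T.IsTree)
    (hstrong : ∃ v, 2 ≤ (univ.filter fun u => T.Adj v u ∧ T.degree u = 1).card)
    (hpc : ∃ π : Finpartition (univ : Finset V), IsPCPartition T π) :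
    ∀ v : V, 2 ≤ (univ.filter fun u => T.Adj v u ∧ T.degree u = 1).card →
      (univ.filter fun u => T.Adj v u ∧ T.degree u = 1).card + 1 ≤ pcNumber T :=
  stmt_11_general T hpc
end

section
/- Let T be a tree that has a perfect matching, and let T′ be the tree obtained from T by attaching at least two new leaves to each vertex of T (i.e., for each vertex v of T, at least two new pendant vertices adjacent only to v are added). Then T′ admits no pc-partition, i.e., PC(T′) = 0. -/
namespace PCPaper

/-- The graph obtained from `T` by attaching, for each `w : W`, a new pendant vertex
adjacent exactly to `f w`. -/
def attachLeaves {V W : Type*} (T : SimpleGraph V) (f : W → V) : SimpleGraph (V ⊕ W) :=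
  SimpleGraph.fromRel (fun x y =>
    match x, y with
    | Sum.inl u, Sum.inl u' => T.Adj u u'
    | Sum.inl u, Sum.inr w => f w = u
    | _, _ => False)

end PCPaper

/-!
Every paired dominating set `S` of `T'` matches each leaf in `S` with its support vertex, so `S`
contains at most one leaf at each vertex; since every vertex carries two leaves, domination then
forces `S` to contain all of `V`, while `V` itself is a paired dominating set thanks to the perfect
matching of `T`. In a pc-partition, a part `C` avoiding `V` (the part of a leaf missed by some
coalition) has a partner `D ⊇ V`. As `D` is not paired dominating, it contains a leaf `w₀`; the
coalition of `D` with its partner misses another leaf `w` at `f w₀`, whose part again avoids `V`,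
so its partner is `D` as well, and that coalition contains both `w` and `w₀`.
-/

namespace PCPaper

variable {V W : Type*} {T : SimpleGraph V} {f : W → V}

lemma pcNumber_eq_zero [Fintype V] [DecidableEq V] {G : SimpleGraph V}
    (h : ∀ π, IsPCPartition G π → π.parts = ∅) : pcNumber G = 0 :=
  Nat.eq_zero_of_le_zero <| csSup_le' <| by
    rintro _ ⟨π, hπ, rfl⟩
    simp [h π hπ]

lemma attachLeaves_adj_inr {x : V ⊕ W} {w : W} :
    (attachLeaves T f).Adj x (Sum.inr w) ↔ x = Sum.inl (f w) := by
  cases x <;> simp [attachLeaves, eq_comm]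

lemma attachLeaves_adj_inl_inl {u u' : V} :
    (attachLeaves T f).Adj (Sum.inl u) (Sum.inl u') ↔ T.Adj u u' := by
  simp only [attachLeaves, SimpleGraph.fromRel_adj, ne_eq, Sum.inl.injEq]
  exact ⟨fun ⟨_, h⟩ => h.elim id SimpleGraph.Adj.symm, fun h => ⟨h.ne, Or.inl h⟩⟩

namespace IsPairedDomSet

variable {S : Set (V ⊕ W)}

lemma leaf_injOn (hS : IsPairedDomSet (attachLeaves T f) S) :
    Set.InjOn f {w | Sum.inr w ∈ S} := by
  obtain ⟨-, M, rfl, hM⟩ := hS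
  intro w₁ h₁ w₂ h₂ hf
  obtain ⟨x₁, hx₁, -⟩ := hM h₁
  obtain ⟨x₂, hx₂, -⟩ := hM h₂
  obtain rfl := attachLeaves_adj_inr.mp (M.adj_sub hx₁.symm)
  obtain rfl := attachLeaves_adj_inr.mp (M.adj_sub hx₂.symm)
  obtain ⟨y, -, hy⟩ := hM (M.edge_vert hx₁.symm)
  exact Sum.inr.inj ((hy _ hx₁.symm).trans (hy _ (hf ▸ hx₂.symm)).symm)

variable (hf : ∀ v : V, 2 ≤ Set.ncard {w : W | f w = v})
include hf

lemma exists_leaf_not_mem (hS : IsPairedDomSet (attachLeaves T f) S) (v : V) :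
    ∃ w, f w = v ∧ Sum.inr w ∉ S := by
  by_contra! h
  obtain ⟨w₁, hw₁, w₂, hw₂, hne⟩ := (Set.one_lt_ncard_iff_nontrivial_and_finite.mp (hf v)).1
  exact hne (hS.leaf_injOn (h w₁ hw₁) (h w₂ hw₂) (hw₁.trans hw₂.symm))

lemma inl_mem (hS : IsPairedDomSet (attachLeaves T f) S) (v : V) : Sum.inl v ∈ S := by
  obtain ⟨w, rfl, hw⟩ := hS.exists_leaf_not_mem hf v
  rcases hS.1 (Sum.inr w) with h | ⟨x, hx, hadj⟩
  · exact absurd h hw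
  · rwa [attachLeaves_adj_inr.mp hadj] at hx

end IsPairedDomSet

lemma isPairedDomSet_range_inl (hpm : ∃ M : T.Subgraph, M.IsPerfectMatching) :
    IsPairedDomSet (attachLeaves T f) (Set.range Sum.inl) := by
  obtain ⟨M, hM, hMs⟩ := hpm
  refine ⟨?_, M.map ⟨Sum.inl, attachLeaves_adj_inl_inl.mpr⟩, ?_, hM.map _ Sum.inl_injective⟩
  · rintro (u | w)
    · exact Or.inl ⟨u, rfl⟩
    · exact Or.inr ⟨_, ⟨f w, rfl⟩, attachLeaves_adj_inr.mpr rfl⟩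
  · simp [SimpleGraph.Subgraph.isSpanning_iff.mp hMs, Set.image_univ]

namespace IsPCPartition

variable [Fintype V] [DecidableEq V] [Fintype W] [DecidableEq W]
  {π : Finpartition (Finset.univ : Finset (V ⊕ W))}
  (hf : ∀ v : V, 2 ≤ Set.ncard {w : W | f w = v})
include hf

lemma exists_leaf_part_inl_not_mem {X Y : Finset (V ⊕ W)} (hX : X ∈ π.parts) (hY : Y ∈ π.parts)
    (hXY : IsPairedDomSet (attachLeaves T f) (↑X ∪ ↑Y)) (v : V) :
    ∃ w, f w = v ∧ Sum.inr w ∉ (↑X ∪ ↑Y : Set (V ⊕ W)) ∧ ∀ u, Sum.inl u ∉ π.part (Sum.inr w) := by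
  obtain ⟨w, hwv, hw⟩ := hXY.exists_leaf_not_mem hf v
  refine ⟨w, hwv, hw, fun u hu => hw ?_⟩
  have hwZ := π.mem_part (Finset.mem_univ (Sum.inr w))
  have hZ := π.part_mem.2 (Finset.mem_univ (Sum.inr w))
  rcases hXY.inl_mem hf u with h | h
  · exact Or.inl (π.eq_of_mem_parts hZ hX hu h ▸ hwZ)
  · exact Or.inr (π.eq_of_mem_parts hZ hY hu h ▸ hwZ)

variable (hπ : IsPCPartition (attachLeaves T f) π)
include hπ

lemma exists_part_forall_inl_mem (v : V) : ∃ D ∈ π.parts, ∀ u, Sum.inl u ∈ D := by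
  have hA := π.part_mem.2 (Finset.mem_univ (Sum.inl v))
  obtain ⟨-, B, hB, -, -, -, -, hAB⟩ := hπ _ hA
  obtain ⟨w, -, -, hC⟩ := exists_leaf_part_inl_not_mem hf hA hB hAB v
  obtain ⟨-, D, hD, -, -, -, -, hCD⟩ := hπ _ (π.part_mem.2 (Finset.mem_univ (Sum.inr w)))
  exact ⟨D, hD, fun u => (hCD.inl_mem hf u).resolve_left (hC u)⟩

lemma not_forall_inl_mem (hpm : ∃ M : T.Subgraph, M.IsPerfectMatching)
    {D : Finset (V ⊕ W)} (hD : D ∈ π.parts) : ¬ ∀ u, Sum.inl u ∈ D := by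
  intro hVD
  obtain ⟨hDnot, E, hE, -, -, -, -, hDE⟩ := hπ D hD
  obtain ⟨w₀, hw₀⟩ : ∃ w₀, Sum.inr w₀ ∈ D := by
    by_contra! h
    refine hDnot ?_
    convert isPairedDomSet_range_inl hpm
    ext (u | w) <;> simp [hVD, h]
  obtain ⟨w, hw, hwDE, hF⟩ := exists_leaf_part_inl_not_mem hf hD hE hDE (f w₀)
  obtain ⟨-, D', hD', -, -, -, -, hFD'⟩ := hπ _ (π.part_mem.2 (Finset.mem_univ (Sum.inr w)))
  obtain rfl : D' = D :=
    π.eq_of_mem_parts hD' hD ((hFD'.inl_mem hf (f w₀)).resolve_left (hF _)) (hVD _)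
  obtain rfl : w = w₀ :=
    hFD'.leaf_injOn (Or.inl (π.mem_part (Finset.mem_univ _))) (Or.inr hw₀) hw
  exact hwDE (Or.inl hw₀)

lemma parts_eq_empty (hpm : ∃ M : T.Subgraph, M.IsPerfectMatching) : π.parts = ∅ := by
  refine Finset.not_nonempty_iff_eq_empty.mp fun ⟨A, hA⟩ => ?_
  obtain ⟨x, -⟩ := π.nonempty_of_mem_parts hA
  obtain ⟨D, hD, hVD⟩ := exists_part_forall_inl_mem hf hπ (x.elim id f)
  exact not_forall_inl_mem hf hπ hpm hD hVD

end IsPCPartition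

end PCPaper

open PCPaper in
theorem stmt_12_general {V W : Type*} [Fintype V] [DecidableEq V] [Fintype W] [DecidableEq W]
    (T : SimpleGraph V)
    (hpm : ∃ M : T.Subgraph, M.IsPerfectMatching)
    (f : W → V) (hf : ∀ v : V, 2 ≤ Set.ncard {w : W | f w = v}) :
    pcNumber (attachLeaves T f) = 0 :=
  pcNumber_eq_zero fun _ hπ => hπ.parts_eq_empty hf hpm

open PCPaper in
/-- If a tree `T` has a perfect matching and `T'` is obtained from `T` by attaching at
least two new leaves to each vertex of `T`, then `T'` has no pc-partition. -/
theorem stmt_12 {V W : Type*} [Fintype V] [DecidableEq V] [Fintype W] [DecidableEq W]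
    (T : SimpleGraph V) (hT : T.IsTree)
    (hpm : ∃ M : T.Subgraph, M.IsPerfectMatching)
    (f : W → V) (hf : ∀ v : V, 2 ≤ Set.ncard {w : W | f w = v}) :
    pcNumber (attachLeaves T f) = 0 :=
  stmt_12_general T hpm f hf
end

section
/- Let G be a simple graph of order n that contains at least one cycle. If PC(G) = n, then the girth of G is at most 4. -/
open Finset

namespace Finpartition

variable {α : Type*} [DecidableEq α] {s : Finset α}

theorem card_eq_one_of_card_parts_eq (P : Finpartition s) (h : #P.parts = #s) :
    ∀ t ∈ P.parts, #t = 1 := by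
  by_contra! ⟨t, ht, ht1⟩
  have hpos : ∀ u ∈ P.parts, 0 < #u := fun u hu ↦ (P.nonempty_of_mem_parts hu).card_pos
  have hlt : ∑ _u ∈ P.parts, 1 < ∑ u ∈ P.parts, #u :=
    sum_lt_sum (fun u hu ↦ hpos u hu) ⟨t, ht, by have := hpos t ht; omega⟩
  rw [P.sum_card_parts, sum_const, smul_eq_mul, mul_one] at hlt
  omega

end Finpartition

namespace SimpleGraph

variable {V : Type*} {G : SimpleGraph V}

theorem girth_le_three {a b c : V} (hab : G.Adj a b) (hbc : G.Adj b c) (hca : G.Adj c a) :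
    G.girth ≤ 3 := by
  have hcyc : (Walk.cons hab (.cons hbc (.cons hca .nil)) : G.Walk a a).IsCycle := by
    simp [Walk.isCycle_def, Walk.isTrail_def, hab.ne, hbc.ne, hca.ne, hab.ne', hca.ne']
  simpa using girth_le_length hcyc

theorem girth_le_four {a b c d : V} (hab : G.Adj a b) (hbc : G.Adj b c) (hcd : G.Adj c d)
    (hda : G.Adj d a) (hac : a ≠ c) (hbd : b ≠ d) : G.girth ≤ 4 := by
  have hcyc : (Walk.cons hab (.cons hbc (.cons hcd (.cons hda .nil))) : G.Walk a a).IsCycle := by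
    simp [Walk.isCycle_def, Walk.isTrail_def, hab.ne, hbc.ne, hcd.ne, hda.ne,
      hab.ne', hda.ne', hac, hbd, hac.symm]
  simpa using girth_le_length hcyc

theorem Walk.IsCycle.length_le_two_mul_card [DecidableEq V] {a : V} {c : G.Walk a a}
    (hc : c.IsCycle) {s : Finset V} (hs : ∀ d ∈ c.darts, d.fst ∈ s ∨ d.snd ∈ s) :
    c.length ≤ 2 * #s := by
  -- Within a cycle, a dart is determined by its tail, and also by its head.
  have hfst : (c.darts.map (·.fst)).Nodup := c.map_fst_darts ▸ hc.nodup_dropLast_support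
  have hsnd : (c.darts.map (·.snd)).Nodup := c.map_snd_darts ▸ hc.support_nodup
  set D := c.darts.toFinset
  have hD : #D = c.length := by
    rw [List.toFinset_card_of_nodup (hfst.of_map _), c.length_darts]
  have hcard : ∀ f : G.Dart → V, (c.darts.map f).Nodup → #(D.filter (f · ∈ s)) ≤ #s :=
    fun f hf ↦ card_le_card_of_injOn f (fun d hd ↦ (mem_filter.mp hd).2) fun d₁ h₁ d₂ h₂ ↦
      List.inj_on_of_nodup_map hf (List.mem_toFinset.mp (mem_filter.mp h₁).1)
        (List.mem_toFinset.mp (mem_filter.mp h₂).1)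
  have hsub : D ⊆ D.filter (·.fst ∈ s) ∪ D.filter (·.snd ∈ s) := fun d hd ↦ by
    rcases hs d (List.mem_toFinset.mp hd) with h | h <;> simp [hd, h]
  calc c.length = #D := hD.symm
    _ ≤ #(D.filter (·.fst ∈ s)) + #(D.filter (·.snd ∈ s)) :=
      (card_le_card hsub).trans (card_union_le _ _)
    _ ≤ 2 * #s := by have := hcard _ hfst; have := hcard _ hsnd; omega

end SimpleGraph

namespace PCPaper

open SimpleGraph

variable {V : Type*} {G : SimpleGraph V}

theorem IsPairedDomSet.adj {x y : V} (h : IsPairedDomSet G {x, y}) : G.Adj x y := by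
  obtain ⟨-, M, hMv, hM⟩ := h
  obtain ⟨z, hxz, -⟩ := hM (hMv ▸ Set.mem_insert x {y})
  have hz : z ∈ ({x, y} : Set V) := hMv ▸ hxz.snd_mem
  rcases hz with rfl | rfl
  · exact absurd hxz (M.loopless.irrefl _)
  · exact M.adj_sub hxz

theorem girth_le_four_of_isDomSet_pair {x y : V} (hcyc : ¬ G.IsAcyclic) (hxy : G.Adj x y)
    (hdom : IsDomSet G {x, y}) : G.girth ≤ 4 := by
  classical
  obtain ⟨a, c, hc⟩ : ∃ a, ∃ c : G.Walk a a, c.IsCycle := by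
    simpa [IsAcyclic] using hcyc
  by_cases hout : ∃ d ∈ c.darts, d.fst ∉ ({x, y} : Finset V) ∧ d.snd ∉ ({x, y} : Finset V)
  · obtain ⟨d, -, hu, hv⟩ := hout
    obtain ⟨p, hp, hpu⟩ := (hdom d.fst).resolve_left (by simpa using hu)
    obtain ⟨q, hq, hqv⟩ := (hdom d.snd).resolve_left (by simpa using hv)
    have hpq : p = q ∨ G.Adj q p := by
      rcases hp with rfl | rfl <;> rcases hq with rfl | rfl <;> simp [hxy, hxy.symm]
    rcases hpq with rfl | hqp
    · exact (girth_le_three hpu d.adj hqv.symm).trans (by norm_num)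
    · exact girth_le_four hpu d.adj hqv.symm hqp (by rintro rfl; exact hv (by simpa using hp))
        (by rintro rfl; exact hu (by simpa using hq))
  · push Not at hout
    have hs : ∀ d ∈ c.darts, d.fst ∈ ({x, y} : Finset V) ∨ d.snd ∈ ({x, y} : Finset V) :=
      fun d hd ↦ or_iff_not_imp_left.mpr (hout d hd)
    calc G.girth ≤ c.length := girth_le_length hc
      _ ≤ 2 * #({x, y} : Finset V) := hc.length_le_two_mul_card hs
      _ ≤ 4 := by have := card_le_two (a := x) (b := y); omega

variable [Fintype V] [DecidableEq V]

theorem exists_isPCPartition_card_eq_pcNumber (h : pcNumber G ≠ 0) :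
    ∃ π : Finpartition (univ : Finset V), IsPCPartition G π ∧ #π.parts = pcNumber G := by
  have hbdd : BddAbove {k | ∃ π : Finpartition (univ : Finset V),
      IsPCPartition G π ∧ #π.parts = k} :=
    ⟨Fintype.card V, by rintro k ⟨π, -, rfl⟩; exact π.card_parts_le_card⟩
  refine Nat.sSup_mem (Set.nonempty_iff_ne_empty.mpr fun he ↦ h ?_) hbdd
  rw [pcNumber, he, csSup_empty]
  rfl

theorem exists_adj_isDomSet_of_pcNumber_eq_card [Nonempty V]
    (hpc : pcNumber G = Fintype.card V) : ∃ x y, G.Adj x y ∧ IsDomSet G {x, y} := by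
  obtain ⟨π, hπ, hcard⟩ :=
    exists_isPCPartition_card_eq_pcNumber (G := G) (hpc ▸ Fintype.card_ne_zero)
  have hsingle := π.card_eq_one_of_card_parts_eq (hcard.trans hpc)
  obtain ⟨A, hA⟩ : π.parts.Nonempty := by
    rw [← card_pos, hcard, hpc]; exact Fintype.card_pos
  obtain ⟨-, B, hB, -, -, -, -, hAB⟩ := hπ A hA
  obtain ⟨x, rfl⟩ := card_eq_one.mp (hsingle A hA)
  obtain ⟨y, rfl⟩ := card_eq_one.mp (hsingle B hB)
  rw [coe_singleton, coe_singleton, Set.singleton_union] at hAB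
  exact ⟨x, y, hAB.adj, hAB.1⟩

end PCPaper

open PCPaper in
/-- If `G` contains a cycle and `PC(G) = n`, then the girth of `G` is at most `4`. -/
theorem stmt_16 {V : Type*} [Fintype V] [DecidableEq V] (G : SimpleGraph V)
    (hcyc : ¬ G.IsAcyclic) (hpc : pcNumber G = Fintype.card V) :
    G.girth ≤ 4 := by
  obtain ⟨a, -⟩ : ∃ a, ∃ c : G.Walk a a, c.IsCycle := by simpa [SimpleGraph.IsAcyclic] using hcyc
  have : Nonempty V := ⟨a⟩
  obtain ⟨x, y, hxy, hdom⟩ := exists_adj_isDomSet_of_pcNumber_eq_card hpc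
  exact girth_le_four_of_isDomSet_pair hcyc hxy hdom
end

section
/- Let G be a simple graph of order n that contains a cycle and whose girth is at least 6. Then PC(G) < n − 2. -/
/-!
A pc-partition with at least `n - 2` parts has parts of sizes exceeding one by at most two in
total. A paired dominating set carries a perfect matching, so it has even size, and the partner
of a singleton part `{x}` is therefore a singleton `{y}` or a triple `T`. A dominating edge `xy`
is impossible: without 3- and 4-cycles every other vertex would have degree one, leaving no
cycle. So `T` exists, all other parts are singletons, and `T ∪ {x}` is paired dominating for every
`x ∉ T`: `x` is matched into `T` and the other two vertices of `T` are adjacent. Excluding cycles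
of length 3, 4 and 5, every neighbour of a vertex outside `T` lies in `T`. Writing `T = {c, s, s'}`
with `s ~ s'`, each of the at least three vertices of a cycle (of length at least 6) outside `T`
is then adjacent to `c` and to `s` or `s'`, and two of them have two common neighbours.
-/

namespace SimpleGraph

variable {V : Type*} {G : SimpleGraph V} {a b c d e : V}

lemma not_adj_of_four_le_egirth (h : 4 ≤ G.egirth) (hab : G.Adj a b) (hbc : G.Adj b c) :
    ¬ G.Adj c a := by
  intro hca
  have hcyc : (Walk.cons hab (Walk.cons hbc (Walk.cons hca Walk.nil))).IsCycle := by
    simp [Walk.cons_isCycle_iff, Walk.cons_isPath_iff, hab.ne, hbc.ne, hca.ne, hab.ne', hca.ne']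
  have := h.trans (egirth_le_length hcyc)
  norm_num at this

lemma eq_of_adj_of_five_le_egirth (h : 5 ≤ G.egirth) (hab : G.Adj a b) (hbc : G.Adj b c)
    (had : G.Adj a d) (hdc : G.Adj d c) (hac : a ≠ c) : b = d := by
  by_contra hbd
  have hcyc : (Walk.cons hab (Walk.cons hbc
      (Walk.cons hdc.symm (Walk.cons had.symm Walk.nil)))).IsCycle := by
    simp [Walk.cons_isCycle_iff, Walk.cons_isPath_iff, hab.ne, hbc.ne, had.ne, hab.ne', hdc.ne',
      had.ne', hac, hac.symm, hbd]
  have := h.trans (egirth_le_length hcyc)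
  norm_num at this

lemma not_adj_of_six_le_egirth (h : 6 ≤ G.egirth) (hab : G.Adj a b) (hbc : G.Adj b c)
    (hcd : G.Adj c d) (hde : G.Adj d e) (hac : a ≠ c) (had : a ≠ d) (hbd : b ≠ d) (hbe : b ≠ e)
    (hce : c ≠ e) : ¬ G.Adj e a := by
  intro hea
  have hcyc : (Walk.cons hab (Walk.cons hbc
      (Walk.cons hcd (Walk.cons hde (Walk.cons hea Walk.nil))))).IsCycle := by
    simp [Walk.cons_isCycle_iff, Walk.cons_isPath_iff, hab.ne, hbc.ne, hcd.ne, hde.ne, hea.ne,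
      hab.ne', hea.ne', hac, had, hbd, hbe, hce, hac.symm, had.symm]
  have := h.trans (egirth_le_length hcyc)
  norm_num at this

lemma eq_of_adj_of_forall_eq_or_adj (h : 5 ≤ G.egirth) (hab : G.Adj a b)
    (hdom : ∀ v, v = a ∨ v = b ∨ G.Adj a v ∨ G.Adj b v) (hca : G.Adj c a) (hcb : c ≠ b)
    (hcd : G.Adj c d) : d = a := by
  have h4 : 4 ≤ G.egirth := le_trans (by norm_num) h
  rcases hdom d with rfl | rfl | had | hbd
  · rfl
  · exact absurd hcd.symm (not_adj_of_four_le_egirth h4 hca hab)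
  · exact absurd hcd.symm (not_adj_of_four_le_egirth h4 hca had)
  · exact (eq_of_adj_of_five_le_egirth h hca hab hcd hbd.symm hcb).symm

lemma exists_isCycle_le_length {n : ℕ} (h : n ≤ G.egirth) (hG : ¬ G.IsAcyclic) :
    ∃ (u : V) (p : G.Walk u u), p.IsCycle ∧ n ≤ p.length := by
  obtain ⟨u, p, hp⟩ : ∃ (u : V) (p : G.Walk u u), p.IsCycle := by
    simpa [IsAcyclic] using hG
  exact ⟨u, p, hp, by exact_mod_cast h.trans (egirth_le_length hp)⟩

namespace Walk

variable {u v : V} {p : G.Walk u u}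

lemma IsCycle.exists_adj_ne_adj (hp : p.IsCycle) (hv : v ∈ p.support) :
    ∃ w₁ w₂, w₁ ≠ w₂ ∧ G.Adj v w₁ ∧ G.Adj v w₂ := by
  obtain ⟨w₁, w₂, hne, hw⟩ :=
    Set.ncard_eq_two.mp (hp.ncard_neighborSet_toSubgraph_eq_two hv)
  have hw₁ : w₁ ∈ p.toSubgraph.neighborSet v := by simp [hw]
  have hw₂ : w₂ ∈ p.toSubgraph.neighborSet v := by simp [hw]
  exact ⟨w₁, w₂, hne, p.toSubgraph.adj_sub hw₁, p.toSubgraph.adj_sub hw₂⟩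

lemma IsCycle.length_le_card_support_toFinset [DecidableEq V] (hp : p.IsCycle) :
    p.length ≤ p.support.toFinset.card := by
  calc p.length = p.support.tail.toFinset.card := by
        rw [List.toFinset_card_of_nodup hp.support_nodup, List.length_tail, length_support]; rfl
    _ ≤ p.support.toFinset.card := Finset.card_le_card fun x hx => by
        simpa using List.mem_of_mem_tail (List.mem_toFinset.1 hx)

end Walk

lemma le_card_of_le_egirth [Fintype V] {n : ℕ} (h : n ≤ G.egirth) (hG : ¬ G.IsAcyclic) :
    n ≤ Fintype.card V := by
  classical
  obtain ⟨u, p, hp, hn⟩ := exists_isCycle_le_length h hG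
  exact hn.trans (hp.length_le_card_support_toFinset.trans (Finset.card_le_univ _))

end SimpleGraph

lemma Finpartition.sum_card_sub_one_add_card_parts {α : Type*} [DecidableEq α] {s : Finset α}
    (P : Finpartition s) : ∑ C ∈ P.parts, (C.card - 1) + P.parts.card = s.card := by
  rw [Finset.card_eq_sum_ones, ← Finset.sum_add_distrib, ← P.sum_card_parts]
  exact Finset.sum_congr rfl fun C hC => Nat.sub_add_cancel (P.nonempty_of_mem_parts hC).card_pos

namespace PCPaper

open SimpleGraph

variable {V : Type*} {G : SimpleGraph V} {x y : V}

lemma IsPairedDomSet.adj_of_pair (h : IsPairedDomSet G {x, y}) (hxy : x ≠ y) : G.Adj x y := by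
  obtain ⟨-, M, hMv, hM⟩ := h
  obtain ⟨w, hxw, -⟩ := hM (show x ∈ M.verts by simp [hMv])
  have hw : w = x ∨ w = y := by simpa [hMv] using M.edge_vert hxw.symm
  obtain rfl := hw.resolve_left (M.adj_sub hxw).ne'
  exact M.adj_sub hxw

lemma IsPairedDomSet.even_card {S : Finset V} (h : IsPairedDomSet G ↑S) : Even S.card := by
  obtain ⟨-, M, hMv, hM⟩ := h
  have : Fintype M.verts := hMv ▸ inferInstance
  simpa [hMv] using hM.even_card

variable [DecidableEq V] {T : Finset V}

lemma IsPairedDomSet.exists_adj_of_insert (h : IsPairedDomSet G (insert x ↑T)) (hx : x ∉ T)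
    (hT : T.card = 3) :
    ∃ t ∈ T, G.Adj x t ∧ ∀ s ∈ T, ∀ s' ∈ T, s ≠ t → s' ≠ t → s ≠ s' → G.Adj s s' := by
  obtain ⟨-, M, hMv, hM⟩ := h
  have mem : ∀ {v}, v ∈ M.verts ↔ v = x ∨ v ∈ T := by simp [hMv]
  obtain ⟨t, hxt, -⟩ := hM (mem.2 (Or.inl rfl))
  have ht : t ∈ T := (mem.1 (M.edge_vert hxt.symm)).resolve_left (M.adj_sub hxt).ne'
  refine ⟨t, ht, M.adj_sub hxt, fun s hs s' hs' hst hs't hss' => ?_⟩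
  obtain ⟨r, hsr, -⟩ := hM (mem.2 (Or.inr hs))
  have hr : r ∈ T := (mem.1 (M.edge_vert hsr.symm)).resolve_left fun hrx =>
    hst (hM.eq_of_adj_right (hrx ▸ hsr) hxt.symm)
  have hrt : r ≠ t := fun hrt => hx (hM.eq_of_adj_right hxt (hrt ▸ hsr) ▸ hs)
  have hrs : r ≠ s := (M.adj_sub hsr).ne'
  have hcard : ((T.erase t).erase s).card ≤ 1 := by
    rw [Finset.card_erase_of_mem (Finset.mem_erase.2 ⟨hst, hs⟩), Finset.card_erase_of_mem ht,
      hT]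
  obtain rfl : r = s' := Finset.card_le_one.1 hcard r (by simp [hr, hrt, hrs])
    s' (by simp [hs', hs't, hss'.symm])
  exact M.adj_sub hsr

lemma not_isPairedDomSet_pair (hg : 5 ≤ G.egirth) (hG : ¬ G.IsAcyclic) (hxy : x ≠ y) :
    ¬ IsPairedDomSet G {x, y} := by
  intro h
  have hadj := h.adj_of_pair hxy
  have hdom : ∀ v, v = x ∨ v = y ∨ G.Adj x v ∨ G.Adj y v := by
    simpa [IsDomSet, or_assoc] using h.1
  have hdom' : ∀ v, v = y ∨ v = x ∨ G.Adj y v ∨ G.Adj x v := fun v => by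
    rcases hdom v with h | h | h | h <;> simp [h]
  obtain ⟨v, p, hp, hlen⟩ := exists_isCycle_le_length (n := 3) G.three_le_egirth hG
  obtain ⟨u, hu⟩ : (p.support.toFinset \ {x, y}).Nonempty := by
    rw [← Finset.card_pos]
    have := Finset.le_card_sdiff {x, y} p.support.toFinset
    have := Finset.card_le_two (a := x) (b := y)
    have := hp.length_le_card_support_toFinset
    omega
  simp only [Finset.mem_sdiff, List.mem_toFinset, Finset.mem_insert, Finset.mem_singleton,
    not_or] at hu
  obtain ⟨hup, hux, huy⟩ := hu
  obtain ⟨w₁, w₂, hne, h₁, h₂⟩ := hp.exists_adj_ne_adj hup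
  rcases hdom u with rfl | rfl | hxu | hyu
  · exact hux rfl
  · exact huy rfl
  · exact hne ((eq_of_adj_of_forall_eq_or_adj hg hadj hdom hxu.symm huy h₁).trans
      (eq_of_adj_of_forall_eq_or_adj hg hadj hdom hxu.symm huy h₂).symm)
  · exact hne ((eq_of_adj_of_forall_eq_or_adj hg hadj.symm hdom' hyu.symm hux h₁).trans
      (eq_of_adj_of_forall_eq_or_adj hg hadj.symm hdom' hyu.symm hux h₂).symm)

lemma mem_of_adj_of_forall_isPairedDomSet_insert (hg : 6 ≤ G.egirth) (hT : T.card = 3)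
    (hall : ∀ x ∉ T, IsPairedDomSet G (insert x ↑T)) (hx : x ∉ T) (hxy : G.Adj x y) :
    y ∈ T := by
  by_contra hy
  obtain ⟨t, ht, hxt, htx⟩ := (hall x hx).exists_adj_of_insert hx hT
  obtain ⟨r, hr, hyr, hry⟩ := (hall y hy).exists_adj_of_insert hy hT
  have htr : t ≠ r := by
    rintro rfl
    exact not_adj_of_four_le_egirth (le_trans (by norm_num) hg) hxy hyr hxt.symm
  obtain ⟨m, hm, hmr⟩ := Finset.exists_mem_ne (s := T.erase t) (by simp [ht, hT]) r
  obtain ⟨hmt, hm⟩ := Finset.mem_erase.1 hm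
  exact not_adj_of_six_le_egirth hg hxy hyr (htx r hr m hm htr.symm hmt hmr.symm)
    (hry m hm t ht hmr htr hmt) (ne_of_mem_of_not_mem hr hx).symm
    (ne_of_mem_of_not_mem hm hx).symm (ne_of_mem_of_not_mem hm hy).symm
    (ne_of_mem_of_not_mem ht hy).symm htr.symm hxt.symm

lemma not_forall_isPairedDomSet_insert (hg : 6 ≤ G.egirth) (hG : ¬ G.IsAcyclic)
    (hT : T.card = 3) : ¬ ∀ x ∉ T, IsPairedDomSet G (insert x ↑T) := by
  intro hall
  have hin : ∀ {x y}, x ∉ T → G.Adj x y → y ∈ T :=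
    mem_of_adj_of_forall_isPairedDomSet_insert hg hT hall
  obtain ⟨v, p, hp, hlen⟩ := exists_isCycle_le_length (n := 6) hg hG
  have hU : 2 < (p.support.toFinset \ T).card := by
    have := Finset.le_card_sdiff T p.support.toFinset
    have := hp.length_le_card_support_toFinset
    omega
  set U := p.support.toFinset \ T
  have hmemU : ∀ {u}, u ∈ U ↔ u ∈ p.support ∧ u ∉ T := by simp [U]
  obtain ⟨x₀, hx₀⟩ := Finset.card_pos.1 (by omega : 0 < U.card)
  have hx₀T := (hmemU.1 hx₀).2
  obtain ⟨c, hc, -, hpairs⟩ := (hall x₀ hx₀T).exists_adj_of_insert hx₀T hT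
  obtain ⟨s, s', hss', hcs⟩ := Finset.card_eq_two.1
    (show (T.erase c).card = 2 by rw [Finset.card_erase_of_mem hc, hT])
  have hsT : s ∈ T.erase c := by simp [hcs]
  have hs'T : s' ∈ T.erase c := by simp [hcs]
  have hss'adj : G.Adj s s' := hpairs s (Finset.mem_of_mem_erase hsT) s'
    (Finset.mem_of_mem_erase hs'T) (Finset.ne_of_mem_erase hsT) (Finset.ne_of_mem_erase hs'T)
    hss'
  have hTeq : ∀ w ∈ T, w = c ∨ w = s ∨ w = s' := fun w hw => by
    by_cases hwc : w = c
    · exact Or.inl hwc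
    · exact Or.inr (by simpa [hcs] using Finset.mem_erase.2 ⟨hwc, hw⟩)
  -- a vertex of `U` has two neighbours, both in `T`; as `s s'` is an edge, one of them is `c`
  have hU_adj : ∀ u ∈ U, G.Adj u c ∧ (G.Adj u s ∨ G.Adj u s') := by
    intro u hu
    obtain ⟨hup, huT⟩ := hmemU.1 hu
    obtain ⟨w₁, w₂, hne, h₁, h₂⟩ := hp.exists_adj_ne_adj hup
    have htri : ¬ (G.Adj u s ∧ G.Adj u s') := fun ⟨h, h'⟩ =>
      not_adj_of_four_le_egirth (le_trans (by norm_num) hg) h hss'adj h'.symm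
    rcases hTeq w₁ (hin huT h₁) with rfl | rfl | rfl <;>
      rcases hTeq w₂ (hin huT h₂) with rfl | rfl | rfl <;> tauto
  have hU_nbr : ∀ u ∈ U, ∃ r ∈ T.erase c, G.Adj u r := fun u hu => by
    rw [hcs]
    rcases (hU_adj u hu).2 with h | h
    exacts [⟨s, by simp, h⟩, ⟨s', by simp, h⟩]
  choose! f hfT hfadj using hU_nbr
  obtain ⟨u, hu, u', hu', hne, heq⟩ := Finset.exists_ne_map_eq_of_card_lt_of_maps_to
    (hcs ▸ Finset.card_le_two.trans_lt hU) hfT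
  exact hne (eq_of_adj_of_five_le_egirth (le_trans (by norm_num) hg) (hfadj u hu).symm
    (hU_adj u hu).1 (heq ▸ hfadj u' hu').symm (hU_adj u' hu').1
    (Finset.ne_of_mem_erase (hfT u hu)))

variable [Fintype V]

theorem IsPCPartition.card_parts_add_three_le (hg : 6 ≤ G.egirth) (hG : ¬ G.IsAcyclic)
    {π : Finpartition (Finset.univ : Finset V)} (hπ : IsPCPartition G π) :
    π.parts.card + 3 ≤ Fintype.card V := by
  by_contra! hk
  have hsum := π.sum_card_sub_one_add_card_parts
  rw [Finset.card_univ] at hsum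
  have hpos : ∀ A ∈ π.parts, 0 < A.card := fun A hA => (π.nonempty_of_mem_parts hA).card_pos
  have hle : ∀ A ∈ π.parts, A.card ≤ 3 := fun A hA => by
    have := Finset.single_le_sum (f := fun C => C.card - 1) (fun C _ => Nat.zero_le _) hA
    omega
  have hle₂ : ∀ A ∈ π.parts, ∀ B ∈ π.parts, A ≠ B → A.card + B.card ≤ 4 := by
    intro A hA B hB hAB
    have := Finset.sum_le_sum_of_subset (f := fun C => C.card - 1)
      (Finset.insert_subset_iff.2 ⟨hA, Finset.singleton_subset_iff.2 hB⟩)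
    rw [Finset.sum_pair hAB] at this
    have := hpos A hA
    have := hpos B hB
    omega
  have partner : ∀ x, {x} ∈ π.parts →
      ∃ T ∈ π.parts, T.card = 3 ∧ IsPairedDomSet G (insert x ↑T) := by
    intro x hx
    obtain ⟨-, B, hB, hBx, hdisj, -, -, hdom⟩ := hπ _ hx
    rw [Finset.coe_singleton, Set.singleton_union] at hdom
    have hxB : x ∉ B := by simpa using hdisj
    have hodd : Even (B.card + 1) := by
      rw [← Finset.card_insert_of_notMem hxB]
      exact IsPairedDomSet.even_card (by rwa [Finset.coe_insert])
    have hB1 : B.card ≠ 1 := fun h => by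
      obtain ⟨y, rfl⟩ := Finset.card_eq_one.1 h
      exact not_isPairedDomSet_pair (le_trans (by norm_num) hg) hG
        (by simpa [eq_comm] using hBx) (by simpa using hdom)
    have := hle B hB
    have := hpos B hB
    refine ⟨B, hB, ?_, hdom⟩
    obtain ⟨m, hm⟩ := hodd
    omega
  obtain ⟨x, hx⟩ : ∃ x, {x} ∈ π.parts := by
    by_contra! h
    have h2 : ∀ C ∈ π.parts, 1 ≤ C.card - 1 := fun C hC => by
      have : C.card ≠ 1 := fun h1 => by
        obtain ⟨y, rfl⟩ := Finset.card_eq_one.1 h1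
        exact h y hC
      have := hpos C hC
      omega
    have hcount := Finset.card_nsmul_le_sum _ _ _ h2
    rw [smul_eq_mul, mul_one] at hcount
    have := le_card_of_le_egirth (n := 6) hg hG
    omega
  obtain ⟨T, hT, hT3, -⟩ := partner x hx
  refine not_forall_isPairedDomSet_insert hg hG hT3 fun y hy => ?_
  have hy' : {y} ∈ π.parts := by
    have hC := π.part_mem.2 (Finset.mem_univ y)
    have hyC := π.mem_part_self.2 (Finset.mem_univ y)
    have := hle₂ _ hC T hT fun h => hy (h ▸ hyC)
    rwa [← Finset.eq_singleton_iff_unique_mem.2 ⟨hyC, fun z hz =>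
      Finset.card_le_one.1 (by omega) z hz y hyC⟩]
  obtain ⟨T', hT', hT'3, hdom⟩ := partner y hy'
  obtain rfl : T' = T := by
    by_contra h
    have := hle₂ _ hT' _ hT h
    omega
  exact hdom

end PCPaper

open PCPaper in
/-- If `G` contains a cycle and has girth at least `6`, then `PC(G) < n - 2`. -/
theorem stmt_19 {V : Type*} [Fintype V] [DecidableEq V] (G : SimpleGraph V)
    (hcyc : ¬ G.IsAcyclic) (hg : 6 ≤ G.girth) :
    pcNumber G < Fintype.card V - 2 := by
  have hg' : (6 : ℕ∞) ≤ G.egirth := by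
    rw [← ENat.natCast_toNat (SimpleGraph.egirth_eq_top.not.mpr hcyc)]
    exact_mod_cast hg
  have hn := SimpleGraph.le_card_of_le_egirth (n := 6) hg' hcyc
  have : pcNumber G ≤ Fintype.card V - 3 := csSup_le' <| by
    rintro k ⟨π, hπ, rfl⟩
    have := hπ.card_parts_add_three_le hg' hcyc
    omega
  omega
end
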